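/- Fix a graded system of Hilbert spaces with product ∘. Let σ, σ', ρ, ρ', s, s' ∈ ℝ with σ < σ', and define two weight families u₀ = w₀ = 1, w_n = (n!)^σ·2^{ρn}·(1 + n)^s and u_n = (n!)^{σ'}·2^{ρ'n}·(1 + n)^{s'} for n ≥ 1. Then there exists a constant γ > 0 such that for all elements a, b of the algebra, ‖a ∘ b‖_w ≤ γ·‖a‖_u·‖b‖_u. -/

import Mathlib

/-! A graded system of Hilbert spaces: a family `(E n)_{n ≥ 1}` of real inner product spaces
together with bilinear maps `mul p q : E p →ₗ E q →ₗ E (p+q)`.  An element of the associated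
algebra is a pair `(a₀, (a n)_{n ≥ 1})` with `a₀ : ℝ`, `a n : E n`, all but finitely many `a n`
zero (the component `a 0` is unused dead data).  -/

/-- The degree-`n` component (`n ≥ 1`) of the product of the elements `(a₀, a)` and `(b₀, b)`:
`c n = a₀ • b n + b₀ • a n + ∑_{p+q=n, p,q ≥ 1} a p ∘ b q`. -/
noncomputable def gradedMul {E : ℕ → Type*} [∀ n, NormedAddCommGroup (E n)]
    [∀ n, InnerProductSpace ℝ (E n)]
    (mul : ∀ p q : ℕ, E p →ₗ[ℝ] E q →ₗ[ℝ] E (p + q))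
    (a₀ : ℝ) (a : ∀ n, E n) (b₀ : ℝ) (b : ∀ n, E n) (n : ℕ) : E n :=
  a₀ • b n + b₀ • a n +
    ∑ p ∈ Finset.Ioo 0 n,
      if h : p + (n - p) = n then cast (congrArg E h) (mul p (n - p) (a p) (b (n - p))) else 0

/-- The weighted Hilbert norm `‖a‖_w = √(a₀² + ∑_{n ≥ 1} w n · ‖a n‖²)` (the weight `w 0 = 1`
of the scalar component is built in). -/
noncomputable def wnorm {E : ℕ → Type*} [∀ n, NormedAddCommGroup (E n)]
    (w : ℕ → ℝ) (a₀ : ℝ) (a : ∀ n, E n) : ℝ :=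
  Real.sqrt (a₀ ^ 2 + ∑' n : ℕ, w (n + 1) * ‖a (n + 1)‖ ^ 2)

/-- The weight family `w n (σ, ρ, s) = (n!)^σ · 2^(ρn) · (1+n)^s` on positive integers,
with real exponents (real powers). -/
noncomputable def wgt (σ ρ s : ℝ) (n : ℕ) : ℝ :=
  ((n.factorial : ℝ)) ^ σ * (2 : ℝ) ^ (ρ * n) * (1 + (n : ℝ)) ^ s

/-! With `ν(a) = (|a₀|, ‖a 1‖, ‖a 2‖, …)`, the bound on `∘` gives
`ν(ab)_n ≤ ∑_{p+q=n} ν(a)_p ν(b)_q`. Cauchy–Schwarz on each antidiagonal, with weights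
`(u_p u_q)⁻¹` and `u_p u_q`, bounds `w_n ν(ab)_n²` by
`w_n (∑_{p+q=n} (u_p u_q)⁻¹) · ∑_{p+q=n} u_p ν(a)_p² u_q ν(b)_q²`, and the last sums add up
over `n` to `‖a‖_u² ‖b‖_u²`. So it suffices that `(n + 1) w_n ≤ C u_p u_q` whenever
`p + q = n`. As `n! = (n choose p) p! q!` with `1 ≤ (n choose p) ≤ 2ⁿ`, the quotient is at most
`2^(A n) / (n!)^(σ' - σ)` for a constant `A`, which is bounded since `Kⁿ / n! ≤ exp K`. -/

open Finset Real

lemma wgt_pos (σ ρ s : ℝ) (n : ℕ) : 0 < wgt σ ρ s n := by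
  unfold wgt; positivity

lemma wgt_zero (σ ρ s : ℝ) : wgt σ ρ s 0 = 1 := by simp [wgt]

lemma wgt_add_one_exponent (σ ρ s : ℝ) (n : ℕ) :
    wgt σ ρ (s + 1) n = wgt σ ρ s n * (n + 1) := by
  have : (0 : ℝ) < 1 + n := by positivity
  rw [wgt, wgt, rpow_add_one this.ne', add_comm (n : ℝ) 1]; ring

lemma factorial_add_rpow_le (p q : ℕ) (σ σ' : ℝ) :
    ((p + q).factorial : ℝ) ^ σ ≤
      (2 : ℝ) ^ (|σ'| * (p + q : ℕ)) * ((p + q).factorial : ℝ) ^ (σ - σ') *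
        ((p.factorial : ℝ) ^ σ' * (q.factorial : ℝ) ^ σ') := by
  have hc : (1 : ℝ) ≤ (p + q).choose q := by
    exact_mod_cast Nat.choose_pos (Nat.le_add_left q p)
  have hc_rpow : ((p + q).choose q : ℝ) ^ σ' ≤ (2 : ℝ) ^ (|σ'| * (p + q : ℕ)) :=
    calc ((p + q).choose q : ℝ) ^ σ' ≤ ((p + q).choose q : ℝ) ^ |σ'| :=
          rpow_le_rpow_of_exponent_le hc (le_abs_self σ')
      _ ≤ ((2 : ℝ) ^ (p + q)) ^ |σ'| := by gcongr; exact_mod_cast Nat.choose_le_two_pow _ _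
      _ = (2 : ℝ) ^ (|σ'| * (p + q : ℕ)) := by rw [mul_comm, rpow_natCast_mul zero_le_two]
  have hsplit : ((p + q).factorial : ℝ) ^ σ' =
      ((p + q).choose q : ℝ) ^ σ' * ((p.factorial : ℝ) ^ σ' * (q.factorial : ℝ) ^ σ') := by
    rw [← Nat.add_choose_mul_factorial_mul_factorial p q, Nat.cast_mul, Nat.cast_mul, mul_assoc,
      mul_rpow (by positivity) (by positivity), mul_rpow (by positivity) (by positivity)]
  calc ((p + q).factorial : ℝ) ^ σ
      = ((p + q).factorial : ℝ) ^ (σ - σ') * ((p + q).factorial : ℝ) ^ σ' := by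
        rw [← rpow_add (by positivity), sub_add_cancel]
    _ = ((p + q).choose q : ℝ) ^ σ' * ((p + q).factorial : ℝ) ^ (σ - σ') *
          ((p.factorial : ℝ) ^ σ' * (q.factorial : ℝ) ^ σ') := by rw [hsplit]; ring
    _ ≤ _ := by gcongr

lemma one_add_rpow_le_two_rpow (t : ℝ) (n : ℕ) :
    (1 + (n : ℝ)) ^ t ≤ (2 : ℝ) ^ (|t| * n) := by
  have hn : 1 + (n : ℝ) ≤ 2 ^ n := by
    have := Nat.lt_two_pow_self (n := n); rw [add_comm]; exact_mod_cast this
  calc (1 + (n : ℝ)) ^ t ≤ (1 + (n : ℝ)) ^ |t| :=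
        rpow_le_rpow_of_exponent_le (by simp) (le_abs_self t)
    _ ≤ ((2 : ℝ) ^ n) ^ |t| := by gcongr
    _ = (2 : ℝ) ^ (|t| * n) := by rw [mul_comm, rpow_natCast_mul zero_le_two]

lemma one_add_add_rpow_le (p q : ℕ) (s s' : ℝ) :
    (1 + ((p + q : ℕ) : ℝ)) ^ s ≤
      (1 + ((p + q : ℕ) : ℝ)) ^ (s + 2 * |s'|) * ((1 + (p : ℝ)) ^ s' * (1 + (q : ℝ)) ^ s') := by
  set m : ℝ := 1 + ((p + q : ℕ) : ℝ)
  have hlow : ∀ k ≤ p + q, m ^ (-|s'|) ≤ (1 + (k : ℝ)) ^ s' := fun k hk =>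
    calc m ^ (-|s'|) ≤ (1 + (k : ℝ)) ^ (-|s'|) :=
          rpow_le_rpow_of_nonpos (by positivity) (by simp [m]; exact_mod_cast hk)
            (by simp)
      _ ≤ (1 + (k : ℝ)) ^ s' :=
          rpow_le_rpow_of_exponent_le (by simp) (neg_abs_le s')
  calc m ^ s = m ^ (s + 2 * |s'|) * (m ^ (-|s'|) * m ^ (-|s'|)) := by
        rw [← rpow_add (by positivity), ← rpow_add (by positivity)]; ring_nf
    _ ≤ _ := by gcongr <;> [exact hlow p (by omega); exact hlow q (by omega)]

lemma exists_two_rpow_le_factorial_rpow (a : ℝ) {δ : ℝ} (hδ : 0 < δ) :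
    ∃ C > 0, ∀ n : ℕ, (2 : ℝ) ^ (a * n) ≤ C * (n.factorial : ℝ) ^ δ := by
  set K : ℝ := 2 ^ (a / δ)
  refine ⟨exp K ^ δ, by positivity, fun n => ?_⟩
  have hK : K ^ n ≤ exp K * n.factorial :=
    (div_le_iff₀ (by positivity)).1 (pow_div_factorial_le_exp K (by positivity) n)
  calc (2 : ℝ) ^ (a * n) = (K ^ n) ^ δ := by
        rw [← rpow_natCast_mul (by positivity), ← rpow_mul zero_le_two]
        congr 1; field_simp
    _ ≤ (exp K * n.factorial) ^ δ := by gcongr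
    _ = exp K ^ δ * (n.factorial : ℝ) ^ δ := mul_rpow (by positivity) (by positivity)

lemma exists_wgt_add_le {σ σ' : ℝ} (hσ : σ < σ') (ρ ρ' s s' : ℝ) :
    ∃ C > 0, ∀ p q : ℕ, wgt σ ρ s (p + q) ≤ C * (wgt σ' ρ' s' p * wgt σ' ρ' s' q) := by
  set t := s + 2 * |s'|
  obtain ⟨C, hC, hdecay⟩ :=
    exists_two_rpow_le_factorial_rpow (|σ'| + (ρ - ρ') + |t|) (sub_pos.2 hσ)
  refine ⟨C, hC, fun p q => ?_⟩
  set n := p + q with hn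
  have hexp : (2 : ℝ) ^ (ρ * n) =
      (2 : ℝ) ^ ((ρ - ρ') * n) * ((2 : ℝ) ^ (ρ' * p) * (2 : ℝ) ^ (ρ' * q)) := by
    rw [← rpow_add two_pos, ← rpow_add two_pos, hn]; push_cast; ring_nf
  have hbase : (2 : ℝ) ^ (|σ'| * n) * (2 : ℝ) ^ ((ρ - ρ') * n) * (2 : ℝ) ^ (|t| * n) =
      (2 : ℝ) ^ ((|σ'| + (ρ - ρ') + |t|) * n) := by
    rw [← rpow_add two_pos, ← rpow_add two_pos]; ring_nf
  have hcancel : (n.factorial : ℝ) ^ (σ' - σ) * (n.factorial : ℝ) ^ (σ - σ') = 1 := by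
    rw [← rpow_add (by positivity), sub_add_sub_cancel, sub_self, rpow_zero]
  have hpoly := (one_add_add_rpow_le p q s s').trans
    (mul_le_mul_of_nonneg_right (one_add_rpow_le_two_rpow t n) (by positivity))
  calc wgt σ ρ s n
      ≤ ((2 : ℝ) ^ (|σ'| * n) * (n.factorial : ℝ) ^ (σ - σ') *
            ((p.factorial : ℝ) ^ σ' * (q.factorial : ℝ) ^ σ')) *
          ((2 : ℝ) ^ ((ρ - ρ') * n) * ((2 : ℝ) ^ (ρ' * p) * (2 : ℝ) ^ (ρ' * q))) *
          ((2 : ℝ) ^ (|t| * n) * ((1 + (p : ℝ)) ^ s' * (1 + (q : ℝ)) ^ s')) := by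
        rw [wgt, hexp]; gcongr; exact factorial_add_rpow_le p q σ σ'
    _ = (2 : ℝ) ^ ((|σ'| + (ρ - ρ') + |t|) * n) * (n.factorial : ℝ) ^ (σ - σ') *
          (wgt σ' ρ' s' p * wgt σ' ρ' s' q) := by
        rw [← hbase, wgt, wgt]; ring
    _ ≤ C * (n.factorial : ℝ) ^ (σ' - σ) * (n.factorial : ℝ) ^ (σ - σ') *
          (wgt σ' ρ' s' p * wgt σ' ρ' s' q) := by
        gcongr
        · exact (mul_pos (wgt_pos _ _ _ _) (wgt_pos _ _ _ _)).le
        · exact hdecay n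
    _ = C * (wgt σ' ρ' s' p * wgt σ' ρ' s' q) := by rw [mul_assoc C, hcancel, mul_one]

section Convolution

variable {U W x y z : ℕ → ℝ} {C : ℝ}

lemma sq_sum_antidiagonal_le (hU : ∀ k, 0 < U k) (n : ℕ) :
    (∑ pq ∈ antidiagonal n, x pq.1 * y pq.2) ^ 2 ≤
      (∑ pq ∈ antidiagonal n, (U pq.1 * U pq.2)⁻¹) *
        ∑ pq ∈ antidiagonal n, U pq.1 * x pq.1 ^ 2 * (U pq.2 * y pq.2 ^ 2) := by
  refine sum_sq_le_sum_mul_sum_of_sq_le_mul _ (fun pq _ => ?_) (fun pq _ => ?_) (fun pq _ => ?_)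
  · have := hU pq.1; have := hU pq.2; positivity
  · have := hU pq.1; have := hU pq.2; positivity
  · have := (hU pq.1).ne'; have := (hU pq.2).ne'
    exact le_of_eq (by field_simp)

lemma mul_sum_antidiagonal_inv_le (hU : ∀ k, 0 < U k)
    (hWU : ∀ p q : ℕ, W (p + q) * ((p + q : ℕ) + 1) ≤ C * (U p * U q)) (n : ℕ) :
    W n * ∑ pq ∈ antidiagonal n, (U pq.1 * U pq.2)⁻¹ ≤ C :=
  calc W n * ∑ pq ∈ antidiagonal n, (U pq.1 * U pq.2)⁻¹
      = ∑ pq ∈ antidiagonal n, W (pq.1 + pq.2) * (U pq.1 * U pq.2)⁻¹ := by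
        rw [mul_sum]; exact sum_congr rfl fun pq hpq => by rw [mem_antidiagonal.1 hpq]
    _ ≤ ∑ _pq ∈ antidiagonal n, C / (n + 1) := sum_le_sum fun pq hpq => by
        have := mul_pos (hU pq.1) (hU pq.2)
        rw [← div_eq_mul_inv, div_le_div_iff₀ this (by positivity), ← mem_antidiagonal.1 hpq]
        exact_mod_cast hWU pq.1 pq.2
    _ = C := by rw [sum_const, Nat.card_antidiagonal, nsmul_eq_mul]; field_simp; push_cast; ring

lemma mul_sq_le_of_le_sum_antidiagonal (hW : ∀ n, 0 ≤ W n) (hU : ∀ k, 0 < U k)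
    (hWU : ∀ p q : ℕ, W (p + q) * ((p + q : ℕ) + 1) ≤ C * (U p * U q)) {n : ℕ}
    (hz0 : 0 ≤ z n) (hz : z n ≤ ∑ pq ∈ antidiagonal n, x pq.1 * y pq.2) :
    W n * z n ^ 2 ≤ C * ∑ pq ∈ antidiagonal n, U pq.1 * x pq.1 ^ 2 * (U pq.2 * y pq.2 ^ 2) := by
  have hnonneg : 0 ≤ ∑ pq ∈ antidiagonal n, U pq.1 * x pq.1 ^ 2 * (U pq.2 * y pq.2 ^ 2) :=
    sum_nonneg fun pq _ => by have := hU pq.1; have := hU pq.2; positivity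
  calc W n * z n ^ 2 ≤ W n * (∑ pq ∈ antidiagonal n, x pq.1 * y pq.2) ^ 2 := by
        gcongr; exact hW n
    _ ≤ W n * ((∑ pq ∈ antidiagonal n, (U pq.1 * U pq.2)⁻¹) *
          ∑ pq ∈ antidiagonal n, U pq.1 * x pq.1 ^ 2 * (U pq.2 * y pq.2 ^ 2)) :=
        mul_le_mul_of_nonneg_left (sq_sum_antidiagonal_le hU n) (hW n)
    _ ≤ C * ∑ pq ∈ antidiagonal n, U pq.1 * x pq.1 ^ 2 * (U pq.2 * y pq.2 ^ 2) := by
        rw [← mul_assoc]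
        exact mul_le_mul_of_nonneg_right (mul_sum_antidiagonal_inv_le hU hWU n) hnonneg

theorem tsum_mul_sq_le_of_le_sum_antidiagonal (hW : ∀ n, 0 ≤ W n) (hU : ∀ k, 0 < U k)
    (hWU : ∀ p q : ℕ, W (p + q) * ((p + q : ℕ) + 1) ≤ C * (U p * U q))
    (hz0 : ∀ n, 0 ≤ z n) (hz : ∀ n, z n ≤ ∑ pq ∈ antidiagonal n, x pq.1 * y pq.2)
    (hx : Summable fun n => U n * x n ^ 2) (hy : Summable fun n => U n * y n ^ 2) :
    Summable (fun n => W n * z n ^ 2) ∧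
      ∑' n, W n * z n ^ 2 ≤ C * ((∑' n, U n * x n ^ 2) * ∑' n, U n * y n ^ 2) := by
  have hx0 : 0 ≤ fun n => U n * x n ^ 2 := fun n => by have := hU n; positivity
  have hy0 : 0 ≤ fun n => U n * y n ^ 2 := fun n => by have := hU n; positivity
  have hxy : Summable fun pq : ℕ × ℕ => U pq.1 * x pq.1 ^ 2 * (U pq.2 * y pq.2 ^ 2) :=
    hx.mul_of_nonneg hy hx0 hy0
  have hconv : Summable fun n =>
      C * ∑ pq ∈ antidiagonal n, U pq.1 * x pq.1 ^ 2 * (U pq.2 * y pq.2 ^ 2) :=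
    (summable_sum_mul_antidiagonal_of_summable_mul (f := fun n => U n * x n ^ 2)
      (g := fun n => U n * y n ^ 2) hxy).mul_left C
  have hle := fun n => mul_sq_le_of_le_sum_antidiagonal hW hU hWU (hz0 n) (hz n)
  have hsum := hconv.of_nonneg_of_le (fun n => mul_nonneg (hW n) (sq_nonneg _)) hle
  refine ⟨hsum, (hsum.tsum_le_tsum hle hconv).trans_eq ?_⟩
  rw [tsum_mul_left, hx.tsum_mul_tsum_eq_tsum_sum_antidiagonal hy hxy]

end Convolution

section Graded

variable {E : ℕ → Type*} [∀ n, NormedAddCommGroup (E n)]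

noncomputable def componentNorm (a₀ : ℝ) (a : ∀ n, E n) (n : ℕ) : ℝ :=
  if n = 0 then |a₀| else ‖a n‖

lemma componentNorm_nonneg (a₀ : ℝ) (a : ∀ n, E n) (n : ℕ) : 0 ≤ componentNorm a₀ a n := by
  unfold componentNorm; split_ifs <;> positivity

lemma norm_cast_congrArg {m n : ℕ} (h : m = n) (v : E m) : ‖cast (congrArg E h) v‖ = ‖v‖ := by
  subst h; rfl

lemma summable_mul_componentNorm_sq (w : ℕ → ℝ) (a₀ : ℝ) {a : ∀ n, E n}
    (ha : ∃ N, ∀ n, N ≤ n → a n = 0) :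
    Summable fun n => w n * componentNorm a₀ a n ^ 2 := by
  obtain ⟨N, hN⟩ := ha
  refine summable_of_ne_finset_zero (s := range (N + 1)) fun n hn => ?_
  rw [mem_range, not_lt] at hn
  simp [componentNorm, hN n (by omega), show n ≠ 0 by omega]

lemma wnorm_eq_sqrt_tsum {w : ℕ → ℝ} (hw : w 0 = 1) {a₀ : ℝ} {a : ∀ n, E n}
    (h : Summable fun n => w n * componentNorm a₀ a n ^ 2) :
    wnorm w a₀ a = √(∑' n, w n * componentNorm a₀ a n ^ 2) := by
  rw [wnorm, h.tsum_eq_zero_add]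
  simp [componentNorm, hw]

variable [∀ n, InnerProductSpace ℝ (E n)] (mul : ∀ p q : ℕ, E p →ₗ[ℝ] E q →ₗ[ℝ] E (p + q))
  (hmul : ∀ p q : ℕ, 1 ≤ p → 1 ≤ q → ∀ (x : E p) (y : E q), ‖mul p q x y‖ ≤ ‖x‖ * ‖y‖)
include hmul

lemma norm_gradedMul_le (a₀ : ℝ) (a : ∀ n, E n) (b₀ : ℝ) (b : ∀ n, E n) (n : ℕ) :
    ‖gradedMul mul a₀ a b₀ b n‖ ≤
      |a₀| * ‖b n‖ + ‖a n‖ * |b₀| + ∑ p ∈ Ioo 0 n, ‖a p‖ * ‖b (n - p)‖ := by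
  refine (norm_add₃_le ..).trans (add_le_add_three (by rw [norm_smul, norm_eq_abs])
    (by rw [norm_smul, norm_eq_abs, mul_comm]) ((norm_sum_le ..).trans (sum_le_sum ?_)))
  intro p hp
  obtain ⟨hp0, hpn⟩ := mem_Ioo.1 hp
  have hpq : p + (n - p) = n := Nat.add_sub_cancel' hpn.le
  rw [dif_pos hpq, norm_cast_congrArg hpq]
  exact hmul p (n - p) hp0 (Nat.sub_pos_of_lt hpn) _ _

lemma componentNorm_gradedMul_le (a₀ : ℝ) (a : ∀ n, E n) (b₀ : ℝ) (b : ∀ n, E n) (n : ℕ) :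
    componentNorm (a₀ * b₀) (gradedMul mul a₀ a b₀ b) n ≤
      ∑ pq ∈ antidiagonal n, componentNorm a₀ a pq.1 * componentNorm b₀ b pq.2 := by
  rcases eq_or_ne n 0 with rfl | hn
  · simp [componentNorm, abs_mul]
  have hrange : range (n + 1) = insert 0 (insert n (Ioo 0 n)) := by
    ext p; simp only [mem_range, mem_insert, mem_Ioo]; omega
  rw [Nat.sum_antidiagonal_eq_sum_range_succ
      (fun p q => componentNorm a₀ a p * componentNorm b₀ b q),
    hrange, sum_insert (by simp [hn.symm]), sum_insert (by simp)]
  have hIoo : ∑ p ∈ Ioo 0 n, componentNorm a₀ a p * componentNorm b₀ b (n - p) =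
      ∑ p ∈ Ioo 0 n, ‖a p‖ * ‖b (n - p)‖ := sum_congr rfl fun p hp => by
    obtain ⟨hp0, hpn⟩ := mem_Ioo.1 hp
    simp [componentNorm, hp0.ne', (Nat.sub_pos_of_lt hpn).ne']
  rw [hIoo, ← add_assoc]
  simpa [componentNorm, hn] using norm_gradedMul_le mul hmul a₀ a b₀ b n

end Graded

/-- Norm estimate (`n.11a`): for `σ < σ'` and arbitrary `ρ, ρ', s, s'`, with the weight
families `w n = (n!)^σ·2^(ρn)·(1+n)^s` and `u n = (n!)^σ'·2^(ρ'n)·(1+n)^s'` (`n ≥ 1`,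
`w 0 = u 0 = 1`), there is a constant `γ > 0` such that the product of the algebra satisfies
`‖a ∘ b‖_w ≤ γ·‖a‖_u·‖b‖_u` for all elements `a`, `b`. -/
theorem graded_norm_estimate_mixed_sigma
    {E : ℕ → Type*} [∀ n, NormedAddCommGroup (E n)] [∀ n, InnerProductSpace ℝ (E n)]
    (mul : ∀ p q : ℕ, E p →ₗ[ℝ] E q →ₗ[ℝ] E (p + q))
    (hmul : ∀ p q : ℕ, 1 ≤ p → 1 ≤ q → ∀ (x : E p) (y : E q), ‖mul p q x y‖ ≤ ‖x‖ * ‖y‖)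
    (σ σ' ρ ρ' s s' : ℝ) (hσ : σ < σ') :
    ∃ γ : ℝ, 0 < γ ∧
      ∀ (a₀ : ℝ) (a : ∀ n, E n), (∃ N, ∀ n, N ≤ n → a n = 0) →
      ∀ (b₀ : ℝ) (b : ∀ n, E n), (∃ N, ∀ n, N ≤ n → b n = 0) →
        wnorm (wgt σ ρ s) (a₀ * b₀) (gradedMul mul a₀ a b₀ b) ≤
          γ * wnorm (wgt σ' ρ' s') a₀ a * wnorm (wgt σ' ρ' s') b₀ b := by
  obtain ⟨C, hC, hwgt⟩ := exists_wgt_add_le hσ ρ ρ' (s + 1) s'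
  refine ⟨√C, sqrt_pos.2 hC, fun a₀ a ha b₀ b hb => ?_⟩
  have hsa := summable_mul_componentNorm_sq (wgt σ' ρ' s') a₀ ha
  have hsb := summable_mul_componentNorm_sq (wgt σ' ρ' s') b₀ hb
  obtain ⟨hsab, hle⟩ := tsum_mul_sq_le_of_le_sum_antidiagonal (fun n => (wgt_pos σ ρ s n).le)
    (wgt_pos σ' ρ' s') (fun p q => by rw [← wgt_add_one_exponent]; exact hwgt p q)
    (componentNorm_nonneg _ _) (componentNorm_gradedMul_le mul hmul a₀ a b₀ b) hsa hsb
  have hA : 0 ≤ ∑' n, wgt σ' ρ' s' n * componentNorm a₀ a n ^ 2 :=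
    tsum_nonneg fun n => mul_nonneg (wgt_pos σ' ρ' s' n).le (sq_nonneg _)
  rw [wnorm_eq_sqrt_tsum (wgt_zero σ ρ s) hsab, wnorm_eq_sqrt_tsum (wgt_zero σ' ρ' s') hsa,
    wnorm_eq_sqrt_tsum (wgt_zero σ' ρ' s') hsb, mul_assoc, ← sqrt_mul hA, ← sqrt_mul hC.le]
  exact sqrt_le_sqrt hle
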